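/- arXiv:1907.03561 — 3 statements merged into one kernel-verified Lean document; each statement's English description precedes it below -/
import Mathlib

section
/- For every γ > 0 one has ∫₀^∞ x² e^{x² − γx} dx = +∞. Consequently, the function α(x) = (d/dx)(e^{x²/2} − 1) = x e^{x²/2} (the HJM drift arising from constant volatility σ = −1 and a compound Poisson driver with intensity 1 and standard normal jump sizes, whose cumulant generating function is Ψ(z) = e^{z²/2} − 1) satisfies ∫₀^∞ α(x)² e^{-γx} dx = +∞, hence α ∉ H_{β,γ} for all β > 1, γ > 0. -/
open MeasureTheory Set Real Filter ENNReal

/-- The squared Björk–Svensson norm. -/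
noncomputable def BSnormSq (β γ : ℝ) (h : ℝ → ℝ) : ℝ≥0∞ :=
  ∑' n : ℕ, ENNReal.ofReal ((1 / β) ^ n) *
    ∫⁻ x in Set.Ioi (0 : ℝ),
      ENNReal.ofReal ((iteratedDerivWithin n h (Set.Ici 0) x) ^ 2 * Real.exp (-γ * x))

/-- Membership in the Björk–Svensson space `H_{β,γ}`. -/
def MemBS (β γ : ℝ) (h : ℝ → ℝ) : Prop :=
  ContDiffOn ℝ (⊤ : ℕ∞) h (Set.Ici 0) ∧ BSnormSq β γ h < ⊤

lemma aux_int (γ : ℝ) (hγ : 0 < γ) :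
    ∫⁻ x in Set.Ioi (0 : ℝ), ENNReal.ofReal (x ^ 2 * Real.exp (x ^ 2 - γ * x)) = ⊤ := by
  have hsub : Set.Ioi (γ + 1) ⊆ Set.Ioi (0 : ℝ) := fun x hx => by
    simp only [Set.mem_Ioi] at *; linarith
  have h1 : (⊤ : ℝ≥0∞) ≤ ∫⁻ x in Set.Ioi (γ + 1),
      ENNReal.ofReal (x ^ 2 * Real.exp (x ^ 2 - γ * x)) := by
    have : ∫⁻ _ in Set.Ioi (γ + 1), (1 : ℝ≥0∞) ≤ ∫⁻ x in Set.Ioi (γ + 1),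
        ENNReal.ofReal (x ^ 2 * Real.exp (x ^ 2 - γ * x)) := by
      refine setLIntegral_mono' measurableSet_Ioi fun x hx => ?_
      simp only [Set.mem_Ioi] at hx
      have hx1 : (1 : ℝ) ≤ x := by linarith
      have h2 : (1 : ℝ) ≤ x ^ 2 := by nlinarith
      have h3 : (1 : ℝ) ≤ Real.exp (x ^ 2 - γ * x) := by
        rw [Real.one_le_exp_iff]; nlinarith
      calc (1 : ℝ≥0∞) = ENNReal.ofReal 1 := by simp
        _ ≤ ENNReal.ofReal (x ^ 2 * Real.exp (x ^ 2 - γ * x)) := by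
            apply ENNReal.ofReal_le_ofReal; nlinarith
    refine le_trans ?_ this
    simp [Real.volume_Ioi]
  have h2 : (∫⁻ x in Set.Ioi (γ + 1),
      ENNReal.ofReal (x ^ 2 * Real.exp (x ^ 2 - γ * x))) ≤
      ∫⁻ x in Set.Ioi (0 : ℝ), ENNReal.ofReal (x ^ 2 * Real.exp (x ^ 2 - γ * x)) :=
    lintegral_mono_set hsub
  exact top_le_iff.mp (le_trans h1 h2)

/-- For every `γ > 0` one has `∫₀^∞ x² e^{x²-γx} dx = ∞`; consequently the HJM drift
`α(x) = x e^{x²/2}` (coming from `σ = -1` and a compound Poisson driver with standard normal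
jumps, `Ψ(z) = e^{z²/2} - 1`) satisfies `∫₀^∞ α(x)² e^{-γx} dx = ∞` and hence
`α ∉ H_{β,γ}` for all `β > 1`, `γ > 0`. -/
theorem stmt_2 (γ : ℝ) (hγ : 0 < γ) :
    (∫⁻ x in Set.Ioi (0 : ℝ), ENNReal.ofReal (x ^ 2 * Real.exp (x ^ 2 - γ * x)) = ⊤) ∧
    (∫⁻ x in Set.Ioi (0 : ℝ),
        ENNReal.ofReal ((x * Real.exp (x ^ 2 / 2)) ^ 2 * Real.exp (-γ * x)) = ⊤) ∧
    (∀ β : ℝ, 1 < β → ¬ MemBS β γ (fun x => x * Real.exp (x ^ 2 / 2))) := by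
  have key : ∫⁻ x in Set.Ioi (0 : ℝ),
      ENNReal.ofReal ((x * Real.exp (x ^ 2 / 2)) ^ 2 * Real.exp (-γ * x)) = ⊤ := by
    rw [← aux_int γ hγ]
    apply lintegral_congr
    intro x
    congr 1
    rw [mul_pow, ← Real.exp_nat_mul, mul_assoc, ← Real.exp_add]
    ring_nf
  refine ⟨aux_int γ hγ, key, fun β hβ hmem => ?_⟩
  obtain ⟨hcd, hnorm⟩ := hmem
  have h0 : ENNReal.ofReal ((1 / β) ^ 0) *
      (∫⁻ x in Set.Ioi (0 : ℝ),
        ENNReal.ofReal ((iteratedDerivWithin 0 (fun x => x * Real.exp (x ^ 2 / 2))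
          (Set.Ici 0) x) ^ 2 * Real.exp (-γ * x))) ≤
      BSnormSq β γ (fun x => x * Real.exp (x ^ 2 / 2)) :=
    ENNReal.le_tsum 0
  simp only [iteratedDerivWithin_zero, pow_zero, ENNReal.ofReal_one, one_mul] at h0
  rw [key] at h0
  rw [top_le_iff.mp h0] at hnorm
  exact lt_irrefl _ hnorm
end

section
/- Let γ > 0 and h ∈ C²(ℝ₊;ℝ) with h ≥ 0, h' ≥ 0 and h'' ≥ 0 on ℝ₊. Assume there are c > 0, ε ∈ (−∞, γ/2) and x₀ ∈ ℝ₊ such that h(x) ≤ c e^{εx} and h'(x) ≤ c e^{εx} for all x ≥ x₀. Then ∫₀^∞ h'(x)² e^{-γx} dx ≤ (γ²/2) ∫₀^∞ h(x)² e^{-γx} dx. -/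
/-!
With `F = (h h' + γ/2 h²) e^{-γx}` one has `F' = (h'² + h h'' - γ²/2 h²) e^{-γx}`, and `h h'' ≥ 0`.
Integrating over `[0, T]` and dropping `F 0 ≥ 0` bounds `∫₀ᵀ h'² e^{-γx}` by
`F T + γ²/2 ∫₀ᵀ h² e^{-γx}`. The growth bounds give `F T = O(e^{(2ε-γ)T}) → 0` because `ε < γ/2`,
and monotone convergence lets `T → ∞`.
-/

open MeasureTheory Set Real Filter ENNReal Topology

theorem lintegral_Ioi_le_of_eventually_lintegral_Ioc_le {μ : Measure ℝ} {a : ℝ}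
    {f g b : ℝ → ℝ≥0∞} (hf : AEMeasurable f (μ.restrict (Ioi a)))
    (hb : Tendsto b atTop (𝓝 0))
    (hle : ∀ᶠ T in atTop, ∫⁻ x in Ioc a T, f x ∂μ ≤ b T + ∫⁻ x in Ioc a T, g x ∂μ) :
    ∫⁻ x in Ioi a, f x ∂μ ≤ ∫⁻ x in Ioi a, g x ∂μ := by
  have hcover : AECover (μ.restrict (Ioi a)) atTop Iic :=
    (aecover_Iic tendsto_id).restrict
  have hlim := hcover.lintegral_tendsto_of_countably_generated hf
  simp only [Measure.restrict_restrict measurableSet_Iic, Iic_inter_Ioi] at hlim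
  refine le_of_tendsto_of_tendsto hlim (by simpa using hb.add_const (∫⁻ x in Ioi a, g x ∂μ)) ?_
  filter_upwards [hle] with T hT
  exact hT.trans (by gcongr; exact Ioc_subset_Ioi_self)

theorem lintegral_ofReal_le_of_integral_le {α : Type*} [MeasurableSpace α] {μ : Measure α}
    {f g : α → ℝ} {B : ℝ} (hf : Integrable f μ) (hg : Integrable g μ) (hf0 : 0 ≤ᵐ[μ] f)
    (hg0 : 0 ≤ᵐ[μ] g) (hfg : ∫ x, f x ∂μ ≤ B + ∫ x, g x ∂μ) :
    ∫⁻ x, ENNReal.ofReal (f x) ∂μ ≤ ENNReal.ofReal B + ∫⁻ x, ENNReal.ofReal (g x) ∂μ := by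
  rw [← ofReal_integral_eq_lintegral_ofReal hf hf0, ← ofReal_integral_eq_lintegral_ofReal hg hg0]
  exact (ofReal_le_ofReal hfg).trans ofReal_add_le

theorem integral_sq_deriv_sub_sq_mul_exp_le {h h' h'' : ℝ → ℝ} {γ a b : ℝ} (hab : a ≤ b)
    (hh : ContinuousOn h (Icc a b)) (hh' : ContinuousOn h' (Icc a b))
    (hd : ∀ x ∈ Ioo a b, HasDerivAt h (h' x) x) (hd' : ∀ x ∈ Ioo a b, HasDerivAt h' (h'' x) x)
    (hmul_nonneg : ∀ x ∈ Ioo a b, 0 ≤ h x * h'' x) :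
    ∫ x in a..b, (h' x ^ 2 - γ ^ 2 / 2 * h x ^ 2) * exp (-γ * x) ≤
      (h b * h' b + γ / 2 * h b ^ 2) * exp (-γ * b) -
        (h a * h' a + γ / 2 * h a ^ 2) * exp (-γ * a) := by
  have hexp : ContinuousOn (fun x => exp (-γ * x)) (Icc a b) := by fun_prop
  refine intervalIntegral.integral_le_sub_of_hasDeriv_right_of_le
    (g := fun x => (h x * h' x + γ / 2 * h x ^ 2) * exp (-γ * x))
    (g' := fun x => (h' x ^ 2 + h x * h'' x - γ ^ 2 / 2 * h x ^ 2) * exp (-γ * x)) hab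
    (((hh.mul hh').add (continuousOn_const.mul (hh.pow 2))).mul hexp) (fun x hx => ?_)
    ((((hh'.pow 2).sub (continuousOn_const.mul (hh.pow 2))).mul hexp).integrableOn_Icc)
    (fun x hx => ?_)
  · have hE := ((hasDerivAt_id x).const_mul (-γ)).exp
    have := (((hd x hx).mul (hd' x hx)).add (((hd x hx).pow 2).const_mul (γ / 2))).mul hE
    refine (this.congr_deriv ?_).hasDerivWithinAt
    simp only [id, Pi.add_apply, Pi.mul_apply, Pi.pow_apply]
    ring
  · exact mul_le_mul_of_nonneg_right (by linarith [hmul_nonneg x hx]) (exp_pos _).le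

theorem integrableOn_Ioc_sq_mul_exp {f : ℝ → ℝ} (hf : ContinuousOn f (Ici 0)) (γ T : ℝ) :
    IntegrableOn (fun x => f x ^ 2 * exp (-γ * x)) (Ioc 0 T) :=
  (((hf.mono Icc_subset_Ici_self).pow 2).mul (by fun_prop)).integrableOn_Icc.mono_set
    Ioc_subset_Icc_self

theorem setIntegral_Ioc_sq_deriv_mul_exp_le {γ T : ℝ} {h h' h'' : ℝ → ℝ} (hγ : 0 ≤ γ) (hT : 0 ≤ T)
    (hd1 : ∀ x ∈ Ici (0 : ℝ), HasDerivWithinAt h (h' x) (Ici 0) x)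
    (hd2 : ∀ x ∈ Ici (0 : ℝ), HasDerivWithinAt h' (h'' x) (Ici 0) x)
    (hpos : ∀ x, 0 ≤ x → 0 ≤ h x) (hpos' : ∀ x, 0 ≤ x → 0 ≤ h' x)
    (hpos'' : ∀ x, 0 ≤ x → 0 ≤ h'' x) :
    ∫ x in Ioc 0 T, h' x ^ 2 * exp (-γ * x) ≤
      (h T * h' T + γ / 2 * h T ^ 2) * exp (-γ * T) +
        ∫ x in Ioc 0 T, γ ^ 2 / 2 * (h x ^ 2 * exp (-γ * x)) := by
  have hh : ContinuousOn h (Ici 0) := fun x hx => (hd1 x hx).continuousWithinAt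
  have hh' : ContinuousOn h' (Ici 0) := fun x hx => (hd2 x hx).continuousWithinAt
  have hderiv {f f' : ℝ → ℝ} (hf : ∀ x ∈ Ici (0 : ℝ), HasDerivWithinAt f (f' x) (Ici 0) x)
      (x : ℝ) (hx : x ∈ Ioo 0 T) : HasDerivAt f (f' x) x :=
    (hf x hx.1.le).hasDerivAt (Ici_mem_nhds hx.1)
  have hFTC := integral_sq_deriv_sub_sq_mul_exp_le (γ := γ) hT (hh.mono Icc_subset_Ici_self)
    (hh'.mono Icc_subset_Ici_self) (hderiv hd1) (hderiv hd2)
    (fun x hx => mul_nonneg (hpos x hx.1.le) (hpos'' x hx.1.le))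
  have hF0 : 0 ≤ (h 0 * h' 0 + γ / 2 * h 0 ^ 2) * exp (-γ * 0) := by
    have := hpos 0 le_rfl
    have := hpos' 0 le_rfl
    positivity
  have hsplit : ∫ x in Ioc 0 T, (h' x ^ 2 - γ ^ 2 / 2 * h x ^ 2) * exp (-γ * x) =
      (∫ x in Ioc 0 T, h' x ^ 2 * exp (-γ * x)) -
        ∫ x in Ioc 0 T, γ ^ 2 / 2 * (h x ^ 2 * exp (-γ * x)) := by
    rw [← integral_sub (integrableOn_Ioc_sq_mul_exp hh' γ T)
      ((integrableOn_Ioc_sq_mul_exp hh γ T).const_mul _)]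
    refine setIntegral_congr_fun measurableSet_Ioc fun x _ => ?_
    ring
  rw [intervalIntegral.integral_of_le hT, hsplit] at hFTC
  linarith

theorem mul_add_sq_mul_exp_le {γ ε c T u v : ℝ} (hγ : 0 ≤ γ) (hu : 0 ≤ u)
    (huc : u ≤ c * exp (ε * T)) (hvc : v ≤ c * exp (ε * T)) :
    (u * v + γ / 2 * u ^ 2) * exp (-γ * T) ≤ c ^ 2 * (1 + γ / 2) * exp ((2 * ε - γ) * T) :=
  calc (u * v + γ / 2 * u ^ 2) * exp (-γ * T)
      ≤ ((c * exp (ε * T)) ^ 2 + γ / 2 * (c * exp (ε * T)) ^ 2) * exp (-γ * T) := by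
        gcongr
        nlinarith
    _ = c ^ 2 * (1 + γ / 2) * exp ((2 * ε - γ) * T) := by
        rw [show (2 * ε - γ) * T = ε * T + ε * T + -γ * T by ring, exp_add, exp_add]
        ring

theorem stmt_6_general (γ : ℝ) (hγ : 0 < γ) (h h' h'' : ℝ → ℝ)
    (hd1 : ∀ x ∈ Set.Ici (0 : ℝ), HasDerivWithinAt h (h' x) (Set.Ici 0) x)
    (hd2 : ∀ x ∈ Set.Ici (0 : ℝ), HasDerivWithinAt h' (h'' x) (Set.Ici 0) x)
    (hpos : ∀ x, 0 ≤ x → 0 ≤ h x) (hpos' : ∀ x, 0 ≤ x → 0 ≤ h' x)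
    (hpos'' : ∀ x, 0 ≤ x → 0 ≤ h'' x)
    (c ε x₀ : ℝ) (hε : ε < γ / 2)
    (hbd : ∀ x, x₀ ≤ x → h x ≤ c * Real.exp (ε * x))
    (hbd' : ∀ x, x₀ ≤ x → h' x ≤ c * Real.exp (ε * x)) :
    (∫⁻ x in Set.Ioi (0 : ℝ), ENNReal.ofReal (h' x ^ 2 * Real.exp (-γ * x)))
      ≤ ENNReal.ofReal (γ ^ 2 / 2) *
        ∫⁻ x in Set.Ioi (0 : ℝ), ENNReal.ofReal (h x ^ 2 * Real.exp (-γ * x)) := by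
  have hh : ContinuousOn h (Ici 0) := fun x hx => (hd1 x hx).continuousWithinAt
  have hh' : ContinuousOn h' (Ici 0) := fun x hx => (hd2 x hx).continuousWithinAt
  have hmeas : AEMeasurable (fun x => h' x ^ 2 * exp (-γ * x)) (volume.restrict (Ioi 0)) :=
    (((hh'.mono Ioi_subset_Ici_self).pow 2).mul (by fun_prop)).aemeasurable measurableSet_Ioi
  have hlim : Tendsto (fun T => c ^ 2 * (1 + γ / 2) * exp ((2 * ε - γ) * T)) atTop (𝓝 0) := by
    simpa using (tendsto_exp_atBot.comp
      (tendsto_id.const_mul_atTop_of_neg (by linarith : 2 * ε - γ < 0))).const_mul _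
  rw [← lintegral_const_mul' _ _ ofReal_ne_top]
  simp_rw [← ofReal_mul (by positivity : (0 : ℝ) ≤ γ ^ 2 / 2)]
  refine lintegral_Ioi_le_of_eventually_lintegral_Ioc_le hmeas.ennreal_ofReal
    (by simpa using ENNReal.tendsto_ofReal hlim) ?_
  filter_upwards [eventually_ge_atTop 0, eventually_ge_atTop x₀] with T hT hTx
  refine lintegral_ofReal_le_of_integral_le (integrableOn_Ioc_sq_mul_exp hh' γ T)
    ((integrableOn_Ioc_sq_mul_exp hh γ T).const_mul _) (.of_forall fun x => by positivity)
    (.of_forall fun x => by positivity) ?_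
  grw [setIntegral_Ioc_sq_deriv_mul_exp_le hγ.le hT hd1 hd2 hpos hpos' hpos'',
    mul_add_sq_mul_exp_le hγ.le (hpos T hT) (hbd T hTx) (hbd' T hTx)]

/-- If `h ∈ C²(ℝ₊)` with `h, h', h'' ≥ 0` and `h(x) ≤ c e^{εx}`, `h'(x) ≤ c e^{εx}` for
`x ≥ x₀`, where `ε < γ/2`, then `∫₀^∞ h'(x)² e^{-γx} dx ≤ (γ²/2) ∫₀^∞ h(x)² e^{-γx} dx`. -/
theorem stmt_6 (γ : ℝ) (hγ : 0 < γ) (h h' h'' : ℝ → ℝ)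
    (hd1 : ∀ x ∈ Set.Ici (0 : ℝ), HasDerivWithinAt h (h' x) (Set.Ici 0) x)
    (hd2 : ∀ x ∈ Set.Ici (0 : ℝ), HasDerivWithinAt h' (h'' x) (Set.Ici 0) x)
    (hcont : ContinuousOn h'' (Set.Ici 0))
    (hpos : ∀ x, 0 ≤ x → 0 ≤ h x) (hpos' : ∀ x, 0 ≤ x → 0 ≤ h' x)
    (hpos'' : ∀ x, 0 ≤ x → 0 ≤ h'' x)
    (c ε x₀ : ℝ) (hc : 0 < c) (hε : ε < γ / 2) (hx₀ : 0 ≤ x₀)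
    (hbd : ∀ x, x₀ ≤ x → h x ≤ c * Real.exp (ε * x))
    (hbd' : ∀ x, x₀ ≤ x → h' x ≤ c * Real.exp (ε * x)) :
    (∫⁻ x in Set.Ioi (0 : ℝ), ENNReal.ofReal (h' x ^ 2 * Real.exp (-γ * x)))
      ≤ ENNReal.ofReal (γ ^ 2 / 2) *
        ∫⁻ x in Set.Ioi (0 : ℝ), ENNReal.ofReal (h x ^ 2 * Real.exp (-γ * x)) :=
  stmt_6_general γ hγ h h' h'' hd1 hd2 hpos hpos' hpos'' c ε x₀ hε hbd hbd'
end

section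
/- Let β > 1 and 0 < γ ≤ √2, and let η₁, η₂ ∈ ℝ with 0 ≤ η₂ ≤ η₁ < γ/2 and η₁² < β. Then Σ_{n=0}^∞ β^{-n} ∫₀^∞ (η₁ⁿ e^{η₁x} − η₂ⁿ e^{η₂x})² e^{-γx} dx ≤ (β/(β−1)) (η₁ − η₂)² ∫₀^∞ x² e^{(2η₁ − γ)x} dx, and the integral on the right-hand side is finite. In particular, the H_{β,γ}-distance between the exponentials e^{η₁·} and e^{η₂·} is bounded by a constant times |η₁ − η₂|. -/
open MeasureTheory Set Real ENNReal

/-! For `0 ≤ b ≤ a` (here `a = η₁`, `b = η₂`), the mean value theorem in the parameter gives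
`|aⁿ e^{ax} - bⁿ e^{bx}| ≤ (a - b) (A + B x) e^{ax}` with `A = n a^{n-1}`, `B = aⁿ`, so for
`δ = γ - 2a` the `n`-th integral is at most
`(a - b)² ∫₀^∞ (A + B x)² e^{-δx} dx = (a - b)² ((A δ + B)² + B²) / δ³`.
Since `2a + δ = γ ≤ √2`, one has `(A δ + B)² + B² ≤ 2` uniformly in `n`, so every integral is at
most `(a - b)² · 2 / δ³ = (a - b)² ∫₀^∞ x² e^{-δx} dx`, and the weights `β^{-n}` sum to
`β / (β - 1)`. -/

lemma natCast_mul_pow_pred_mul_one_sub_le {t : ℝ} (ht0 : 0 ≤ t) (ht1 : t ≤ 1) (n : ℕ) :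
    n * t ^ (n - 1) * (1 - t) ≤ 1 - t ^ n := by
  rcases n with _ | m
  · simp
  have hsum : (m + 1 : ℝ) * t ^ m ≤ ∑ k ∈ Finset.range (m + 1), t ^ k := by
    simpa using Finset.card_nsmul_le_sum (Finset.range (m + 1)) (t ^ ·) (t ^ m) fun k hk =>
      pow_le_pow_of_le_one ht0 ht1 (Nat.le_of_lt_succ (Finset.mem_range.mp hk))
  simpa [geom_sum_mul_neg] using mul_le_mul_of_nonneg_right hsum (sub_nonneg.2 ht1)

/-- With `t = √2 a ≤ 1` and `δ ≤ √2 (1 - t)`, the bound `n t^{n-1} (1 - t) ≤ 1 - tⁿ` gives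
`√2ⁿ (n a^{n-1} δ + aⁿ) ≤ 2 - tⁿ`, hence `2ⁿ` times the left-hand side is at most
`(2 - tⁿ)² + t²ⁿ ≤ 4`. -/
lemma sq_add_sq_le_two_of_two_mul_add_le_sqrt_two {a δ : ℝ} (ha : 0 ≤ a) (hδ : 0 ≤ δ)
    (h : 2 * a + δ ≤ √2) (n : ℕ) :
    (n * a ^ (n - 1) * δ + a ^ n) ^ 2 + (a ^ n) ^ 2 ≤ 2 := by
  rcases n with _ | m
  · norm_num
  rw [Nat.add_sub_cancel]
  push_cast
  set s := √2
  have hs0 : 0 ≤ s := sqrt_nonneg 2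
  have hs2 : s ^ 2 = 2 := sq_sqrt zero_le_two
  set t := s * a
  have ht0 : 0 ≤ t := by positivity
  have ht1 : t ≤ 1 := by nlinarith
  have hgeom : (m + 1) * t ^ m * (1 - t) ≤ 1 - t ^ (m + 1) := by
    simpa using natCast_mul_pow_pred_mul_one_sub_le ht0 ht1 (m + 1)
  set X := (m + 1) * a ^ m * δ + a ^ (m + 1)
  have hscaled : s ^ (m + 1) * X ≤ 2 - t ^ (m + 1) :=
    calc s ^ (m + 1) * X ≤ s ^ (m + 1) * ((m + 1) * a ^ m * (s * (1 - t)) + a ^ (m + 1)) := by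
          have hδ' : δ ≤ s * (1 - t) := by simp only [t]; nlinarith
          simp only [X]; gcongr
      _ = 2 * ((m + 1) * t ^ m * (1 - t)) + t ^ (m + 1) := by
          simp only [t, mul_pow]
          linear_combination (m + 1 : ℝ) * a ^ m * (1 - s * a) * s ^ m * hs2
      _ ≤ 2 - t ^ (m + 1) := by linarith
  have hu0 : 0 ≤ t ^ (m + 1) := by positivity
  have hu1 : t ^ (m + 1) ≤ 1 := pow_le_one₀ ht0 ht1
  have hsX : 0 ≤ s ^ (m + 1) * X := by positivity
  have hscaled_sq : (s ^ (m + 1) * X) ^ 2 + (t ^ (m + 1)) ^ 2 ≤ 4 := by nlinarith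
  have hexpand : (s ^ (m + 1) * X) ^ 2 + (t ^ (m + 1)) ^ 2
      = 2 ^ (m + 1) * (X ^ 2 + (a ^ (m + 1)) ^ 2) := by
    simp only [t, mul_pow, ← hs2, ← pow_mul]; ring
  have hpow : (2 : ℝ) ≤ 2 ^ (m + 1) := le_self_pow₀ one_le_two (Nat.succ_ne_zero m)
  nlinarith

lemma abs_pow_mul_exp_sub_pow_mul_exp_le {a b x : ℝ} (hb : 0 ≤ b) (hba : b ≤ a) (hx : 0 ≤ x)
    (n : ℕ) :
    |a ^ n * exp (a * x) - b ^ n * exp (b * x)|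
      ≤ (a - b) * ((n * a ^ (n - 1) + a ^ n * x) * exp (a * x)) := by
  let f' : ℝ → ℝ := fun t => (n * t ^ (n - 1) + t ^ n * x) * exp (t * x)
  have hderiv (t : ℝ) (_ : t ∈ Icc b a) :
      HasDerivWithinAt (fun t => t ^ n * exp (t * x)) (f' t) (Icc b a) t :=
    ((hasDerivAt_pow n t).fun_mul (hasDerivAt_mul_const x).exp).hasDerivWithinAt.congr_deriv
      (by simp only [f']; ring)
  have hbound : ∀ t ∈ Ico b a, ‖f' t‖ ≤ f' a := fun t ⟨hbt, hta⟩ => by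
    have ht0 : 0 ≤ t := hb.trans hbt
    have ha0 : 0 ≤ a := hb.trans hba
    rw [norm_of_nonneg (by positivity)]
    simp only [f']
    gcongr
  rw [← norm_eq_abs, mul_comm (a - b)]
  exact norm_image_sub_le_of_norm_deriv_le_segment' hderiv hbound a (right_mem_Icc.2 hba)

lemma integrableOn_pow_mul_exp_neg_mul_Ioi (k : ℕ) {δ : ℝ} (hδ : 0 < δ) :
    IntegrableOn (fun x : ℝ => x ^ k * exp (-δ * x)) (Ioi 0) := by
  simpa [Real.rpow_natCast] using
    integrableOn_rpow_mul_exp_neg_mul_rpow (p := 1) (s := k) (by linarith [k.cast_nonneg (α := ℝ)])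
      zero_lt_one hδ

lemma integral_pow_mul_exp_neg_mul_Ioi (k : ℕ) {δ : ℝ} (hδ : 0 < δ) :
    ∫ x in Ioi 0, x ^ k * exp (-δ * x) = k.factorial / δ ^ (k + 1) := by
  have h := integral_rpow_mul_exp_neg_mul_Ioi (a := k + 1) (by positivity) hδ
  simp_rw [add_sub_cancel_right, Real.rpow_natCast, Gamma_nat_eq_factorial, ← neg_mul] at h
  rw [h, ← Nat.cast_succ, Real.rpow_natCast, one_div_pow, one_div_mul_eq_div]

lemma lintegral_pow_mul_exp_neg_mul_Ioi (k : ℕ) {δ : ℝ} (hδ : 0 < δ) :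
    ∫⁻ x in Ioi 0, ENNReal.ofReal (x ^ k * exp (-δ * x))
      = ENNReal.ofReal (k.factorial / δ ^ (k + 1)) := by
  rw [← integral_pow_mul_exp_neg_mul_Ioi k hδ,
    ofReal_integral_eq_lintegral_ofReal (integrableOn_pow_mul_exp_neg_mul_Ioi k hδ)]
  filter_upwards [ae_restrict_mem measurableSet_Ioi] with x hx
  exact mul_nonneg (pow_nonneg (le_of_lt hx) k) (exp_nonneg _)

lemma lintegral_sq_add_mul_mul_exp_neg_mul_Ioi (A B : ℝ) {δ : ℝ} (hδ : 0 < δ) :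
    ∫⁻ x in Ioi 0, ENNReal.ofReal ((A + B * x) ^ 2 * exp (-δ * x))
      = ENNReal.ofReal (((A * δ + B) ^ 2 + B ^ 2) / δ ^ 3) := by
  have hI (k : ℕ) := integrableOn_pow_mul_exp_neg_mul_Ioi k hδ
  have hexpand : (fun x => (A + B * x) ^ 2 * exp (-δ * x)) = fun x =>
      A ^ 2 * (x ^ 0 * exp (-δ * x)) + 2 * A * B * (x ^ 1 * exp (-δ * x))
        + B ^ 2 * (x ^ 2 * exp (-δ * x)) := by
    funext x; ring
  have hI01 := ((hI 0).const_mul (A ^ 2)).fun_add ((hI 1).const_mul (2 * A * B))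
  have hint : IntegrableOn (fun x => (A + B * x) ^ 2 * exp (-δ * x)) (Ioi 0) := by
    rw [hexpand]; exact hI01.fun_add ((hI 2).const_mul _)
  rw [← ofReal_integral_eq_lintegral_ofReal hint (ae_of_all _ fun x => by positivity), hexpand,
    integral_add hI01 ((hI 2).const_mul _), integral_add ((hI 0).const_mul _) ((hI 1).const_mul _),
    integral_const_mul, integral_const_mul, integral_const_mul,
    integral_pow_mul_exp_neg_mul_Ioi 0 hδ, integral_pow_mul_exp_neg_mul_Ioi 1 hδ,
    integral_pow_mul_exp_neg_mul_Ioi 2 hδ]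
  congr 1
  field_simp
  norm_num
  ring

lemma tsum_ofReal_one_div_pow {β : ℝ} (hβ : 1 < β) :
    ∑' n : ℕ, ENNReal.ofReal ((1 / β) ^ n) = ENNReal.ofReal (β / (β - 1)) := by
  have h0 : 0 ≤ 1 / β := by positivity
  have h1 : 1 / β < 1 := (div_lt_one (by positivity)).2 hβ
  rw [← ENNReal.ofReal_tsum_of_nonneg (pow_nonneg h0) (summable_geometric_of_lt_one h0 h1),
    tsum_geometric_of_lt_one h0 h1]
  congr 1
  field_simp

lemma lintegral_sq_pow_mul_exp_sub_mul_exp_neg_le {a b γ : ℝ} (hb : 0 ≤ b) (hba : b ≤ a)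
    (ha : 2 * a < γ) (hγ : γ ≤ √2) (n : ℕ) :
    ∫⁻ x in Ioi 0,
        ENNReal.ofReal ((a ^ n * exp (a * x) - b ^ n * exp (b * x)) ^ 2 * exp (-γ * x))
      ≤ ENNReal.ofReal ((a - b) ^ 2 * (2 / (γ - 2 * a) ^ 3)) := by
  set δ := γ - 2 * a
  have hδ : 0 < δ := sub_pos.2 ha
  set A : ℝ := n * a ^ (n - 1)
  set B : ℝ := a ^ n
  have hpointwise : ∀ x ∈ Ioi (0 : ℝ),
      ENNReal.ofReal ((a ^ n * exp (a * x) - b ^ n * exp (b * x)) ^ 2 * exp (-γ * x))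
        ≤ ENNReal.ofReal (((a - b) * A + (a - b) * B * x) ^ 2 * exp (-δ * x)) := by
    intro x hx
    have hexp : exp (a * x) ^ 2 * exp (-γ * x) = exp (-δ * x) := by
      rw [sq, ← exp_add, ← exp_add]; congr 1; simp only [δ]; ring
    apply ENNReal.ofReal_le_ofReal
    calc (a ^ n * exp (a * x) - b ^ n * exp (b * x)) ^ 2 * exp (-γ * x)
        = |a ^ n * exp (a * x) - b ^ n * exp (b * x)| ^ 2 * exp (-γ * x) := by rw [sq_abs]
      _ ≤ ((a - b) * ((A + B * x) * exp (a * x))) ^ 2 * exp (-γ * x) := by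
          gcongr; exact abs_pow_mul_exp_sub_pow_mul_exp_le hb hba (le_of_lt hx) n
      _ = ((a - b) * A + (a - b) * B * x) ^ 2 * (exp (a * x) ^ 2 * exp (-γ * x)) := by ring
      _ = ((a - b) * A + (a - b) * B * x) ^ 2 * exp (-δ * x) := by rw [hexp]
  calc _ ≤ ∫⁻ x in Ioi 0,
          ENNReal.ofReal (((a - b) * A + (a - b) * B * x) ^ 2 * exp (-δ * x)) :=
        setLIntegral_mono' measurableSet_Ioi hpointwise
    _ = ENNReal.ofReal ((a - b) ^ 2 * (((A * δ + B) ^ 2 + B ^ 2) / δ ^ 3)) := by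
        rw [lintegral_sq_add_mul_mul_exp_neg_mul_Ioi _ _ hδ]; ring_nf
    _ ≤ ENNReal.ofReal ((a - b) ^ 2 * (2 / δ ^ 3)) := by
        gcongr
        exact sq_add_sq_le_two_of_two_mul_add_le_sqrt_two (hb.trans hba) hδ.le (by linarith) n

theorem stmt_7_general (β γ η₁ η₂ : ℝ) (hβ : 1 < β) (hγ : γ ≤ Real.sqrt 2)
    (hη₂ : 0 ≤ η₂) (hη : η₂ ≤ η₁) (hη₁ : η₁ < γ / 2) :
    (∑' n : ℕ, ENNReal.ofReal ((1 / β) ^ n) *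
        ∫⁻ x in Set.Ioi (0 : ℝ),
          ENNReal.ofReal ((η₁ ^ n * Real.exp (η₁ * x) - η₂ ^ n * Real.exp (η₂ * x)) ^ 2 *
            Real.exp (-γ * x)))
      ≤ ENNReal.ofReal (β / (β - 1) * (η₁ - η₂) ^ 2) *
          (∫⁻ x in Set.Ioi (0 : ℝ), ENNReal.ofReal (x ^ 2 * Real.exp ((2 * η₁ - γ) * x))) ∧
    (∫⁻ x in Set.Ioi (0 : ℝ), ENNReal.ofReal (x ^ 2 * Real.exp ((2 * η₁ - γ) * x))) < ⊤ := by
  have hδ : 0 < γ - 2 * η₁ := by linarith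
  have hJ : ∫⁻ x in Ioi (0 : ℝ), ENNReal.ofReal (x ^ 2 * exp ((2 * η₁ - γ) * x))
      = ENNReal.ofReal (2 / (γ - 2 * η₁) ^ 3) := by
    rw [← neg_sub γ, lintegral_pow_mul_exp_neg_mul_Ioi 2 hδ]; norm_num
  refine ⟨?_, hJ ▸ ofReal_lt_top⟩
  calc _ ≤ ∑' n : ℕ, ENNReal.ofReal ((1 / β) ^ n) *
          ENNReal.ofReal ((η₁ - η₂) ^ 2 * (2 / (γ - 2 * η₁) ^ 3)) :=
        ENNReal.tsum_le_tsum fun n => mul_le_mul_right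
          (lintegral_sq_pow_mul_exp_sub_mul_exp_neg_le hη₂ hη (by linarith) hγ n) _
    _ = _ := by
        rw [ENNReal.tsum_mul_right, tsum_ofReal_one_div_pow hβ, hJ, ← ofReal_mul (by positivity),
          ← ofReal_mul (by have := sub_pos.2 hβ; positivity), mul_assoc]

/-- Lipschitz estimate for exponential curves in the Björk–Svensson space: for `β > 1`,
`0 < γ ≤ √2` and `0 ≤ η₂ ≤ η₁ < γ/2` with `η₁² < β`,
`‖e^{η₁·} - e^{η₂·}‖²_{β,γ} ≤ (β/(β-1)) (η₁ - η₂)² ∫₀^∞ x² e^{(2η₁-γ)x} dx`,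
and the integral on the right-hand side is finite. -/
theorem stmt_7 (β γ η₁ η₂ : ℝ) (hβ : 1 < β) (hγ0 : 0 < γ) (hγ : γ ≤ Real.sqrt 2)
    (hη₂ : 0 ≤ η₂) (hη : η₂ ≤ η₁) (hη₁ : η₁ < γ / 2) (hη₁β : η₁ ^ 2 < β) :
    (∑' n : ℕ, ENNReal.ofReal ((1 / β) ^ n) *
        ∫⁻ x in Set.Ioi (0 : ℝ),
          ENNReal.ofReal ((η₁ ^ n * Real.exp (η₁ * x) - η₂ ^ n * Real.exp (η₂ * x)) ^ 2 *
            Real.exp (-γ * x)))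
      ≤ ENNReal.ofReal (β / (β - 1) * (η₁ - η₂) ^ 2) *
          (∫⁻ x in Set.Ioi (0 : ℝ), ENNReal.ofReal (x ^ 2 * Real.exp ((2 * η₁ - γ) * x))) ∧
    (∫⁻ x in Set.Ioi (0 : ℝ), ENNReal.ofReal (x ^ 2 * Real.exp ((2 * η₁ - γ) * x))) < ⊤ :=
  stmt_7_general β γ η₁ η₂ hβ hγ hη₂ hη hη₁
end
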